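/- arXiv:math-ph/0107013 — 3 statements merged into one kernel-verified Lean document; each statement's English description precedes it below -/
import Mathlib

section
/- Let A be a nonunital ring (or C*-algebra) and A⁺ its unitization. A right A-module E is finitely generated over A and projective over A⁺ if and only if E ≅ pAⁿ for some n and some idempotent p ∈ Mₙ(A). -/
/-!
A finitely generated projective right `A⁺`-module `E` is a retract of a free module:
`g ∘ f = id` for some `f : E → (A⁺)ⁿ`. The idempotent `f ∘ g` is left multiplication by a
matrix `p`; since every element of `E` is a combination of finitely many with coefficients in
`A`, every `f e` has entries in the ideal `A`, hence so do the columns `f (g eⱼ)` of `p`, and `f`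
maps `E` onto `pAⁿ`. Conversely, if `f : E ≅ pAⁿ`, the columns of `p` lie in `pAⁿ` and their
preimages generate `E` with coefficients in `A`, while `f⁻¹ ∘ p` splits `f`, so `E` is a direct
summand of `(A⁺)ⁿ`. Only the fact that `A` is a two-sided ideal of `A⁺` matters, so everything
works for a two-sided ideal `I` of an arbitrary ring `R`.
-/

open MulOpposite Matrix Finset

instance Module.Free.mulOpposite_self {R : Type*} [Semiring R] : Module.Free Rᵐᵒᵖ R :=
  .of_equiv (opLinearEquiv Rᵐᵒᵖ).symm

section RightLinear

variable {R : Type*} [Semiring R] {l m n : Type*}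

lemma Pi.eq_sum_op_smul_single [Fintype n] [DecidableEq n] (w : n → R) :
    w = ∑ j, op (w j) • Pi.single j 1 := by
  ext i
  simp [Pi.single_apply]

def Matrix.mulVecRight [Fintype n] (p : Matrix m n R) : (n → R) →ₗ[Rᵐᵒᵖ] m → R where
  toFun := p.mulVec
  map_add' := p.mulVec_add
  map_smul' := p.mulVec_smul

def LinearMap.toMatrixRight [DecidableEq n] (q : (n → R) →ₗ[Rᵐᵒᵖ] m → R) : Matrix m n R :=
  Matrix.of fun i j => q (Pi.single j 1) i

lemma LinearMap.toMatrixRight_mulVec [Fintype n] [DecidableEq n] (q : (n → R) →ₗ[Rᵐᵒᵖ] m → R)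
    (w : n → R) : q.toMatrixRight *ᵥ w = q w := by
  conv_rhs => rw [Pi.eq_sum_op_smul_single w]
  ext i
  simp [mulVec, dotProduct, toMatrixRight]

lemma LinearMap.toMatrixRight_comp [Fintype m] [DecidableEq m] [DecidableEq n]
    (q : (m → R) →ₗ[Rᵐᵒᵖ] l → R) (q' : (n → R) →ₗ[Rᵐᵒᵖ] m → R) :
    (q ∘ₗ q').toMatrixRight = q.toMatrixRight * q'.toMatrixRight := by
  ext i j
  exact (congrFun (q.toMatrixRight_mulVec (q' (Pi.single j 1))) i).symm

lemma Module.exists_comp_eq_id_pi_of_projective (E : Type*) [AddCommMonoid E] [Module Rᵐᵒᵖ E]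
    [Module.Finite Rᵐᵒᵖ E] [Module.Projective Rᵐᵒᵖ E] :
    ∃ (k : ℕ) (f : E →ₗ[Rᵐᵒᵖ] Fin k → R) (g : (Fin k → R) →ₗ[Rᵐᵒᵖ] E), g ∘ₗ f = .id := by
  obtain ⟨k, g, f, -, -, hgf⟩ := Module.Finite.exists_comp_eq_id_of_projective Rᵐᵒᵖ E
  let u : (Fin k → Rᵐᵒᵖ) ≃ₗ[Rᵐᵒᵖ] Fin k → R :=
    LinearEquiv.piCongrRight fun _ => (opLinearEquiv Rᵐᵒᵖ).symm
  refine ⟨k, u.toLinearMap ∘ₗ f, g ∘ₗ u.symm.toLinearMap, ?_⟩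
  rw [← hgf]
  ext e
  simp

end RightLinear

section Ideal

variable {R : Type*} [Ring R] (I : TwoSidedIdeal R) {E : Type*} [AddCommGroup E] [Module Rᵐᵒᵖ E]

lemma TwoSidedIdeal.apply_mem_of_eq_sum {ι : Type*} (f : E →ₗ[Rᵐᵒᵖ] ι → R) {s : Finset E}
    {e : E} {a : E → I} (he : e = ∑ x ∈ s, MulOpposite.op (a x : R) • x) (i : ι) : f e i ∈ I := by
  subst he
  simp only [map_sum, map_smul, Finset.sum_apply, Pi.smul_apply, op_smul_eq_mul]
  exact sum_mem fun x _ => I.mul_mem_left _ _ (a x).2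

lemma TwoSidedIdeal.mulVec_mem {m n : Type*} [Fintype n] {p : Matrix m n R}
    (hp : ∀ i j, p i j ∈ I) (w : n → R) (i : m) : (p *ᵥ w) i ∈ I :=
  sum_mem fun j _ => I.mul_mem_right _ _ (hp i j)

lemma TwoSidedIdeal.exists_sum_image_eq [DecidableEq E] {ι : Type*} [Fintype ι] (x : ι → E)
    (v : ι → I) : ∃ a : E → I,
      ∑ j, MulOpposite.op (v j : R) • x j = ∑ y ∈ univ.image x, MulOpposite.op (a y : R) • y := by
  refine ⟨fun y => ⟨∑ j with x j = y, (v j : R), sum_mem fun j _ => (v j).2⟩, ?_⟩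
  rw [← sum_fiberwise_of_maps_to (g := x) (t := univ.image x)
    fun j _ => mem_image_of_mem x (mem_univ j)]
  refine sum_congr rfl fun y _ => ?_
  rw [op_sum, sum_smul]
  exact sum_congr rfl fun j hj => by rw [(mem_filter.1 hj).2]

theorem TwoSidedIdeal.exists_idempotent_of_projective [Module.Projective Rᵐᵒᵖ E] {s : Finset E}
    (hs : ∀ e, ∃ a : E → I, e = ∑ x ∈ s, MulOpposite.op (a x : R) • x) :
    ∃ (n : ℕ) (p : Matrix (Fin n) (Fin n) R), (∀ i j, p i j ∈ I) ∧ p * p = p ∧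
      ∃ f : E →ₗ[Rᵐᵒᵖ] Fin n → R, Function.Injective f ∧
        Set.range f = {w | ∃ v : Fin n → I, w = p *ᵥ fun j => (v j : R)} := by
  have : Module.Finite Rᵐᵒᵖ E := by
    refine ⟨s, eq_top_iff.2 fun e _ => ?_⟩
    obtain ⟨a, rfl⟩ := hs e
    exact sum_mem fun x hx => Submodule.smul_mem _ _ (Submodule.subset_span hx)
  obtain ⟨n, f, g, hgf⟩ := Module.exists_comp_eq_id_pi_of_projective (R := R) E
  have hfg (e : E) : g (f e) = e := LinearMap.congr_fun hgf e
  have hfI (e : E) (i : Fin n) : f e i ∈ I := by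
    obtain ⟨a, ha⟩ := hs e
    exact I.apply_mem_of_eq_sum f ha i
  have hp (w : Fin n → R) : (f ∘ₗ g).toMatrixRight *ᵥ w = f (g w) :=
    (f ∘ₗ g).toMatrixRight_mulVec w
  refine ⟨n, (f ∘ₗ g).toMatrixRight, fun i j => hfI _ i, ?_, f,
    Function.LeftInverse.injective hfg, ?_⟩
  · rw [← LinearMap.toMatrixRight_comp]
    exact congrArg _ (LinearMap.ext fun w => congrArg f (hfg (g w)))
  · ext w
    constructor
    · rintro ⟨e, rfl⟩
      exact ⟨fun j => ⟨f e j, hfI e j⟩, by rw [hp, hfg]⟩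
    · rintro ⟨v, rfl⟩
      exact ⟨g _, (hp _).symm⟩

section Idempotent

variable {I} {n : Type*} [Fintype n] {p : Matrix n n R} (hpI : ∀ i j, p i j ∈ I)
  (hp : p * p = p) {f : E →ₗ[Rᵐᵒᵖ] n → R}
  (hrange : Set.range f = {w | ∃ v : n → I, w = p *ᵥ fun j => (v j : R)})
include hpI hp hrange

lemma TwoSidedIdeal.mulVec_mem_range (w : n → R) : p *ᵥ w ∈ Set.range f :=
  hrange ▸ ⟨fun i => ⟨_, I.mulVec_mem hpI w i⟩, by simp [mulVec_mulVec, hp]⟩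

lemma TwoSidedIdeal.exists_generating_finset_of_range_eq [DecidableEq n]
    (hf : Function.Injective f) :
    ∃ s : Finset E, ∀ e, ∃ a : E → I, e = ∑ x ∈ s, MulOpposite.op (a x : R) • x := by
  classical
  choose x hx using fun j => I.mulVec_mem_range hpI hp hrange (Pi.single j 1)
  refine ⟨univ.image x, fun e => ?_⟩
  obtain ⟨v, hv⟩ : f e ∈ {w | ∃ v : n → I, w = p *ᵥ fun j => (v j : R)} := hrange ▸ ⟨e, rfl⟩
  obtain ⟨a, ha⟩ := I.exists_sum_image_eq x v
  refine ⟨a, (hf ?_).trans ha⟩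
  rw [hv, map_sum]
  ext i
  simp [hx, mulVec, dotProduct]

lemma TwoSidedIdeal.projective_of_range_eq (hf : Function.Injective f) :
    Module.Projective Rᵐᵒᵖ E := by
  have hfix (e : E) : p *ᵥ f e = f e := by
    obtain ⟨v, hv⟩ : f e ∈ {w | ∃ v : n → I, w = p *ᵥ fun j => (v j : R)} := hrange ▸ ⟨e, rfl⟩
    rw [hv, mulVec_mulVec, hp]
  let F := LinearEquiv.ofInjective f hf
  refine .of_split f (F.symm.toLinearMap ∘ₗ p.mulVecRight.codRestrict (LinearMap.range f)
    fun w => I.mulVec_mem_range hpI hp hrange w) ?_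
  ext e : 1
  simp only [LinearMap.comp_apply, LinearEquiv.coe_coe, LinearMap.id_apply,
    LinearEquiv.symm_apply_eq]
  exact Subtype.ext (hfix e)

end Idempotent

theorem TwoSidedIdeal.generated_and_projective_iff_exists_idempotent :
    ((∃ s : Finset E, ∀ e, ∃ a : E → I, e = ∑ x ∈ s, MulOpposite.op (a x : R) • x) ∧
      Module.Projective Rᵐᵒᵖ E) ↔
    ∃ (n : ℕ) (p : Matrix (Fin n) (Fin n) R), (∀ i j, p i j ∈ I) ∧ p * p = p ∧
      ∃ f : E →ₗ[Rᵐᵒᵖ] Fin n → R, Function.Injective f ∧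
        Set.range f = {w | ∃ v : Fin n → I, w = p *ᵥ fun j => (v j : R)} := by
  constructor
  · rintro ⟨⟨s, hs⟩, _⟩
    exact I.exists_idempotent_of_projective hs
  · rintro ⟨n, p, hpI, hp, f, hf, hrange⟩
    exact ⟨exists_generating_finset_of_range_eq hpI hp hrange hf,
      projective_of_range_eq hpI hp hrange hf⟩

end Ideal

section Unitization

variable {S A : Type*} [CommRing S] [NonUnitalRing A] [Module S A] [IsScalarTower S A A]
  [SMulCommClass S A A]

lemma Unitization.mem_ker_fstHom {x : Unitization S A} :
    x ∈ TwoSidedIdeal.ker (fstHom S A) ↔ ∃ a : A, x = a := by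
  rw [TwoSidedIdeal.mem_ker, fstHom_apply]
  refine ⟨fun h => ⟨x.snd, Unitization.ext h rfl⟩, ?_⟩
  rintro ⟨a, rfl⟩
  exact fst_inr S a

lemma Unitization.exists_pi_ker_fstHom {ι : Type*}
    {P : (ι → TwoSidedIdeal.ker (fstHom S A)) → Prop} :
    (∃ v, P v) ↔ ∃ v : ι → A, P fun i => ⟨v i, mem_ker_fstHom.2 ⟨v i, rfl⟩⟩ := by
  have hσ : Function.Surjective fun a : A =>
      (⟨a, mem_ker_fstHom.2 ⟨a, rfl⟩⟩ : TwoSidedIdeal.ker (fstHom S A)) := fun x =>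
    (mem_ker_fstHom.1 x.2).imp fun _ ha => Subtype.ext ha.symm
  exact hσ.comp_left.exists

end Unitization

/-- Let `A` be a nonunital ring and `A⁺ = Unitization ℤ A` its
unitization.  A right `A`-module `E` (formalized as a module over `(A⁺)ᵐᵒᵖ`, i.e. a
right `A⁺`-module) is finitely generated over `A` and projective over `A⁺` if and only
if `E ≅ pAⁿ` for some `n` and some idempotent `p ∈ Mₙ(A)`. -/
theorem stmt_0 (A : Type*) [NonUnitalRing A]
    (E : Type*) [AddCommGroup E] [Module (Unitization ℤ A)ᵐᵒᵖ E] :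
    -- E is finitely generated as a right A-module, and projective over A⁺
    ((∃ s : Finset E, ∀ e : E, ∃ a : E → A,
        e = ∑ x ∈ s, (MulOpposite.op ((a x : Unitization ℤ A))) • x)
      ∧ Module.Projective (Unitization ℤ A)ᵐᵒᵖ E)
    ↔
    -- E ≅ pAⁿ for some idempotent p ∈ Mₙ(A)
    ∃ (n : ℕ) (p : Matrix (Fin n) (Fin n) (Unitization ℤ A)),
      (∀ i j, ∃ a : A, p i j = (a : Unitization ℤ A)) ∧ p * p = p ∧
      ∃ f : LinearMap (R := (Unitization ℤ A)ᵐᵒᵖ) (RingHom.id _) E (Fin n → Unitization ℤ A),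
        Function.Injective f ∧
        Set.range f
          = {w | ∃ v : Fin n → A, w = p.mulVec (fun j => ((v j : Unitization ℤ A)))} := by
  -- `(… :)` elaborates the kernel without an expected type: against `TwoSidedIdeal` of the
  -- `Ring` instance, the `NonUnitalRingHomClass` instance of `fstHom` is not found.
  simpa only [Unitization.exists_pi_ker_fstHom, Unitization.mem_ker_fstHom] using
    TwoSidedIdeal.generated_and_projective_iff_exists_idempotent (R := Unitization ℤ A)
      (TwoSidedIdeal.ker (Unitization.fstHom ℤ A) :) (E := E)
end

section
/- Let E be a finitely generated projective right A⁺-module of the form E = p(A⁺)ⁿ where p ∈ Mₙ(A) for nonunital A, and suppose E is finitely generated over A. Then every element e ∈ E lies in pAⁿ, i.e. E = pAⁿ. -/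
/-! Since `A` is an ideal of `A⁺`, every `A`-linear combination `∑ eₖ aₖ` has all its coordinates
in `A`, i.e. with vanishing scalar part; so every `w ∈ E` lifts to a vector `v ∈ Aⁿ`, and
idempotence of `p` gives `w = p w = p v`. -/

open Matrix

theorem Matrix.mulVec_eq_self_of_mul_self_eq {m α : Type*} [Fintype m] [NonUnitalSemiring α]
    {p : Matrix m m α} (hp : p * p = p) {w : m → α} (hw : ∃ v, w = p *ᵥ v) :
    p *ᵥ w = w := by
  obtain ⟨v, rfl⟩ := hw
  rw [mulVec_mulVec, hp]

theorem Unitization.fst_sum_mul_inr {ι R A : Type*} [NonUnitalNonAssocSemiring R] [AddCommMonoid A] [Mul A]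
    [SMul R A] (s : Finset ι) (x : ι → Unitization R A) (a : ι → A) :
    (∑ k ∈ s, x k * (a k : Unitization R A)).fst = 0 := by
  refine Finset.sum_induction _ (fun y : Unitization R A => y.fst = 0) (fun y z hy hz => ?_) fst_zero
    (fun k _ => ?_)
  · rw [fst_add, hy, hz, add_zero]
  · rw [fst_mul, fst_inr, mul_zero]

theorem stmt_3_general (A : Type*) [NonUnitalRing A] (n : ℕ)
    (p : Matrix (Fin n) (Fin n) (Unitization ℤ A))
    (hp : p * p = p)
    (E : Set (Fin n → Unitization ℤ A))
    (hE : E = {w | ∃ v : Fin n → Unitization ℤ A, w = p.mulVec v})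
    (hfg : ∃ (M : ℕ) (e : Fin M → (Fin n → Unitization ℤ A)), (∀ k, e k ∈ E) ∧
      ∀ w ∈ E, ∃ a : Fin M → A,
        w = ∑ k, (fun i => e k i * ((a k : Unitization ℤ A)))) :
    ∀ w ∈ E, ∃ v : Fin n → A, w = p.mulVec (fun j => ((v j : Unitization ℤ A))) := by
  intro w hw
  obtain ⟨M, e, -, hgen⟩ := hfg
  have hfst : ∀ i, (w i).fst = 0 := by
    obtain ⟨a, ha⟩ := hgen w hw
    intro i
    rw [ha, Finset.sum_apply]
    exact Unitization.fst_sum_mul_inr _ _ _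
  rw [hE, Set.mem_ofPred_eq] at hw
  lift w to Fin n → A using hfst
  -- `Unitization ℤ A` reaches `NonUnitalSemiring` along a different instance path; naming `p`
  -- lets unification unfold it.
  exact ⟨w, (mulVec_eq_self_of_mul_self_eq (p := p) hp hw).symm⟩

/-- Let `A` be a nonunital ring, an ideal in its unitization
`A⁺ = Unitization ℤ A`, and let `E = p(A⁺)ⁿ` for an idempotent `p ∈ Mₙ(A)`.  If `E` is
finitely generated over `A` (there are `e₁, …, e_M ∈ E` such that every `e ∈ E` is a sum
`∑ eᵢ·aᵢ` with `aᵢ ∈ A`), then every element of `E` lies in `pAⁿ`, i.e. `E = pAⁿ`. -/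
theorem stmt_3 (A : Type*) [NonUnitalRing A] (n : ℕ)
    (p : Matrix (Fin n) (Fin n) (Unitization ℤ A))
    (hpA : ∀ i j, ∃ a : A, p i j = (a : Unitization ℤ A)) (hp : p * p = p)
    (E : Set (Fin n → Unitization ℤ A))
    (hE : E = {w | ∃ v : Fin n → Unitization ℤ A, w = p.mulVec v})
    (hfg : ∃ (M : ℕ) (e : Fin M → (Fin n → Unitization ℤ A)), (∀ k, e k ∈ E) ∧
      ∀ w ∈ E, ∃ a : Fin M → A,
        w = ∑ k, (fun i => e k i * ((a k : Unitization ℤ A)))) :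
    ∀ w ∈ E, ∃ v : Fin n → A, w = p.mulVec (fun j => ((v j : Unitization ℤ A))) :=
  stmt_3_general A n p hp E hE hfg
end

section
/- Let D and e be operators on a Hilbert space with e = e* = e² a projection, such that the off-diagonal part B = eD(1−e) + (1−e)De satisfies: de := [D,e] anticommutes with D. If (de)² = −m·Id is a scalar with m > 0, then B' := m^{−1/2}B is a self-adjoint unitary with B'e = (1−e)B', and B'e is a partial isometry implementing a Murray–von Neumann equivalence (B'e)*(B'e) = e, (B'e)(B'e)* = 1−e. -/
/-- Let `D` and `e` be operators on a Hilbert space, `D` self-adjoint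
and `e = e* = e²` a projection, and let `B = eD(1-e) + (1-e)De` be the off-diagonal
part of `D`.  Suppose `de := [D,e]` anticommutes with `D` and `(de)² = -m·Id` is a
scalar with `m > 0`.  Then `B' := m^{-1/2}·B` is a self-adjoint unitary with
`B'e = (1-e)B'`, and `B'e` is a partial isometry implementing a Murray–von Neumann
equivalence `(B'e)*(B'e) = e`, `(B'e)(B'e)* = 1 - e`. -/
theorem stmt_16 {H : Type*} [NormedAddCommGroup H] [InnerProductSpace ℂ H]
    [CompleteSpace H]
    (D e : H →L[ℂ] H) (hD : star D = D) (hes : star e = e) (he2 : e * e = e)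
    (B : H →L[ℂ] H) (hB : B = e * D * (1 - e) + (1 - e) * D * e)
    (hanti : D * (D * e - e * D) + (D * e - e * D) * D = 0)
    (m : ℝ) (hm : 0 < m)
    (hsq : (D * e - e * D) * (D * e - e * D) = (-(m : ℂ)) • (1 : H →L[ℂ] H))
    (B' : H →L[ℂ] H) (hB' : B' = ((Real.sqrt m : ℂ))⁻¹ • B) :
    star B' = B' ∧ B' * B' = 1 ∧ B' * e = (1 - e) * B' ∧
    star (B' * e) * (B' * e) = e ∧ (B' * e) * star (B' * e) = 1 - e := by
  obtain ⟨d, hd⟩ : ∃ d : H →L[ℂ] H, d = D * e - e * D := ⟨_, rfl⟩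
  rw [← hd] at hsq
  -- B = d * (2e - 1)
  have hBd : B = d * (2 * e - 1) := by
    rw [hB, hd]
    have h1 : (D * e - e * D) * (2 * e - 1)
        = 2 * (D * (e * e)) - D * e - 2 * (e * D * e) + e * D := by noncomm_ring
    have h2 : e * D * (1 - e) + (1 - e) * D * e
        = 2 * (D * e) - D * e - 2 * (e * D * e) + e * D := by noncomm_ring
    rw [h1, h2, he2]
  -- e * d = d - d * e
  have hed : e * d = d - d * e := by
    rw [hd]
    have h1 : e * (D * e - e * D) = e * D * e - (e * e) * D := by noncomm_ring
    have h2 : (D * e - e * D) - (D * e - e * D) * e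
        = e * D * e - e * D + (D * e - D * (e * e)) := by noncomm_ring
    rw [h1, h2, he2]; noncomm_ring
  -- anticommutation of (2e-1) with d
  have hcomm : (2 * e - 1) * d = - (d * (2 * e - 1)) := by
    have : (2 * e - 1) * d = 2 * (e * d) - d := by noncomm_ring
    rw [this, hed]; noncomm_ring
  -- B² = m • 1
  have hee : (2 * e - 1) * (2 * e - 1) = 1 := by
    have : (2 * e - 1) * (2 * e - 1) = 4 * (e * e) - 4 * e + 1 := by noncomm_ring
    rw [this, he2]; noncomm_ring
  have hB2 : B * B = (m : ℂ) • 1 := by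
    have h1 : B * B = d * ((2 * e - 1) * d) * (2 * e - 1) := by rw [hBd]; noncomm_ring
    rw [h1, hcomm]
    have h2 : d * -(d * (2 * e - 1)) * (2 * e - 1)
        = - ((d * d) * ((2 * e - 1) * (2 * e - 1))) := by noncomm_ring
    rw [h2, hee, hsq]
    simp
  -- B * e = (1 - e) * B
  have hBe : B * e = (1 - e) * B := by
    have h1 : B * e = d * e := by
      have h : B * e = d * (2 * (e * e) - e) := by rw [hBd]; noncomm_ring
      rw [h, he2]; noncomm_ring
    have h2 : (1 - e) * B = d * e := by
      have h : (1 - e) * B = (d - e * d) * (2 * e - 1) := by rw [hBd]; noncomm_ring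
      rw [h, hed]
      have h' : (d - (d - d * e)) * (2 * e - 1) = 2 * (d * (e * e)) - d * e := by
        noncomm_ring
      rw [h', he2]; noncomm_ring
    rw [h1, h2]
  -- star B = B
  have hBs : star B = B := by
    rw [hB]
    simp only [star_add, star_mul, star_sub, star_one, hD, hes]
    noncomm_ring
  -- scalar facts
  have hc : ((Real.sqrt m : ℂ))⁻¹ * ((Real.sqrt m : ℂ))⁻¹ * (m : ℂ) = 1 := by
    rw [← mul_inv]
    norm_cast
    rw [Real.mul_self_sqrt hm.le]
    rw [inv_mul_cancel₀ (by exact_mod_cast hm.ne')]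
  have hcs : star ((Real.sqrt m : ℂ))⁻¹ = ((Real.sqrt m : ℂ))⁻¹ := by
    simp [star_inv₀, Complex.star_def, Complex.conj_ofReal]
  have h1 : star B' = B' := by
    rw [hB', star_smul, hBs, hcs]
  have h2 : B' * B' = 1 := by
    rw [hB', smul_mul_smul_comm, hB2, smul_smul, hc, one_smul]
  have h3 : B' * e = (1 - e) * B' := by
    rw [hB', smul_mul_assoc, hBe, mul_smul_comm]
  refine ⟨h1, h2, h3, ?_, ?_⟩
  · rw [star_mul, hes, h1, ← mul_assoc, mul_assoc e B' B', h2, mul_one, he2]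
  · rw [star_mul, hes, h1, mul_assoc, ← mul_assoc e e B', he2, ← mul_assoc, h3,
      mul_assoc, h2, mul_one]
end
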